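/- arXiv:1611.05784 — 5 statements merged into one kernel-verified Lean document; each statement's English description precedes it below -/
import Mathlib

section
/- If H is a weakly norming graph (i.e., f ↦ (∫ ∏_{ij∈E(H)} |f(x_i,x_j)| dμ^{|V(H)|})^{1/|E(H)|} is a norm on bounded measurable functions on [0,1]²) and H has at least one edge, then H satisfies Sidorenko's conjecture: for every bounded measurable f : [0,1]² → ℝ, (∫ |f| dμ²)^{|E(H)|} ≤ ∫ ∏_{ij∈E(H)} |f(x_i,x_j)| dμ^{|V(H)|}. -/
open MeasureTheory Set

/-- The unit box `[0,1]^n`. -/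
noncomputable def unitBox (n : ℕ) : Set (Fin n → ℝ) :=
  Set.univ.pi fun _ => Set.Icc (0 : ℝ) 1

/-- The edges of `H`, each listed once as an ordered pair `(i, j)` with `i < j`. -/
def edgePairs {n : ℕ} (H : SimpleGraph (Fin n)) [DecidableRel H.Adj] :
    Finset (Fin n × Fin n) :=
  Finset.univ.filter fun p => H.Adj p.1 p.2 ∧ p.1 < p.2

/-- `∫ ∏_{ij ∈ E(H)} |f(x_i, x_j)| dμ^{|V(H)|}` over the unit box. -/
noncomputable def tAbs {n : ℕ} (H : SimpleGraph (Fin n)) [DecidableRel H.Adj]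
    (f : ℝ → ℝ → ℝ) : ℝ :=
  ∫ x in unitBox n, ∏ p ∈ edgePairs H, |f (x p.1) (x p.2)|

/-- The functional `‖f‖_{r(H)} = tAbs(H, f)^{1/|E(H)|}`. -/
noncomputable def rNorm {n : ℕ} (H : SimpleGraph (Fin n)) [DecidableRel H.Adj]
    (f : ℝ → ℝ → ℝ) : ℝ :=
  tAbs H f ^ (((edgePairs H).card : ℝ)⁻¹)

/-- `f` is bounded. -/
def BddFun (f : ℝ → ℝ → ℝ) : Prop := ∃ C : ℝ, ∀ x y, |f x y| ≤ C

/-- `H` is weakly norming: `‖·‖_{r(H)}` is a norm on bounded measurable functions on `[0,1]²`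
(it satisfies the triangle inequality and vanishes only at the a.e. zero function; homogeneity
is automatic). -/
def WeaklyNorming {n : ℕ} (H : SimpleGraph (Fin n)) [DecidableRel H.Adj] : Prop :=
  (∀ f g : ℝ → ℝ → ℝ, Measurable (Function.uncurry f) → Measurable (Function.uncurry g) →
    BddFun f → BddFun g →
      rNorm H (fun x y => f x y + g x y) ≤ rNorm H f + rNorm H g) ∧
  (∀ f : ℝ → ℝ → ℝ, Measurable (Function.uncurry f) → BddFun f → rNorm H f = 0 →
      ∀ᵐ z : ℝ × ℝ ∂(volume.restrict (Set.Icc (0 : ℝ) 1 ×ˢ Set.Icc (0 : ℝ) 1)),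
        f z.1 z.2 = 0)

lemma icc_prob : IsProbabilityMeasure (volume.restrict (Icc (0:ℝ) 1)) :=
  ⟨by simp [Real.volume_Icc]⟩

lemma boxMeasure_eq_pi (n : ℕ) :
    volume.restrict (unitBox n) = Measure.pi (fun _ : Fin n => volume.restrict (Icc (0:ℝ) 1)) := by
  symm; apply Measure.pi_eq
  intro s hs
  rw [Measure.restrict_apply (MeasurableSet.univ_pi hs)]
  have h1 : (univ.pi s) ∩ unitBox n = univ.pi (fun i => s i ∩ Icc 0 1) := by
    ext x
    simp only [Set.mem_inter_iff, unitBox, Set.mem_pi, Set.mem_univ, true_implies,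
      Set.mem_Icc]
    aesop
  rw [h1, volume_pi_pi]
  simp [Measure.restrict_apply (hs _)]

lemma box_prob (n : ℕ) : IsProbabilityMeasure (volume.restrict (unitBox n)) := by
  rw [boxMeasure_eq_pi]
  haveI := icc_prob
  infer_instance

lemma map_eval_pair {n : ℕ} {i j : Fin n} (hij : i ≠ j) :
    Measure.map (fun x : Fin n → ℝ => (x i, x j)) (volume.restrict (unitBox n))
      = volume.restrict (Icc (0:ℝ) 1 ×ˢ Icc (0:ℝ) 1) := by
  haveI := icc_prob
  rw [boxMeasure_eq_pi]
  rw [show volume.restrict (Icc (0:ℝ) 1 ×ˢ Icc (0:ℝ) 1)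
      = (volume.restrict (Icc (0:ℝ) 1)).prod (volume.restrict (Icc (0:ℝ) 1)) by
    rw [Measure.prod_restrict, ← Measure.volume_eq_prod]]
  symm
  apply Measure.prod_eq
  intro s t hs ht
  rw [Measure.map_apply (by measurability) (hs.prod ht)]
  have hpre : (fun x : Fin n → ℝ => (x i, x j)) ⁻¹' (s ×ˢ t)
      = univ.pi (fun k => if k = i then s else if k = j then t else univ) := by
    ext x
    simp only [Set.mem_preimage, Set.mem_prod, Set.mem_pi, Set.mem_univ, true_implies]
    constructor
    · rintro ⟨h1, h2⟩ k
      split_ifs with hki hkj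
      · subst hki; exact h1
      · subst hkj; exact h2
      · trivial
    · intro h
      refine ⟨?_, ?_⟩
      · have := h i; simpa using this
      · have := h j; simpa [hij.symm] using this
  rw [hpre, Measure.pi_pi]
  rw [show (Finset.univ : Finset (Fin n)) = Finset.univ from rfl]
  have : ∀ k : Fin n, k ∉ ({i, j} : Finset (Fin n)) →
      (volume.restrict (Icc (0:ℝ) 1)) (if k = i then s else if k = j then t else univ) = 1 := by
    intro k hk
    simp only [Finset.mem_insert, Finset.mem_singleton, not_or] at hk
    rw [if_neg hk.1, if_neg hk.2]
    exact measure_univ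
  rw [← Finset.prod_subset (Finset.subset_univ ({i, j} : Finset (Fin n)))
      (fun k _ hk => this k hk)]
  rw [Finset.prod_pair hij]
  simp [hij, Ne.symm hij]

lemma integral_eval_pair {n : ℕ} {i j : Fin n} (hij : i ≠ j) (g : ℝ → ℝ → ℝ)
    (hg : Measurable (Function.uncurry g)) :
    ∫ x in unitBox n, g (x i) (x j)
      = ∫ z in Icc (0:ℝ) 1 ×ˢ Icc (0:ℝ) 1, g z.1 z.2 := by
  rw [← map_eval_pair hij]
  rw [integral_map (by measurability) (by exact hg.aestronglyMeasurable)]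

lemma one_add_sum_le_prod' {ι : Type*} (s : Finset ι) (g : ι → ℝ) (hg : ∀ i ∈ s, 0 ≤ g i) :
    1 + ∑ i ∈ s, g i ≤ ∏ i ∈ s, (1 + g i) := by
  classical
  induction s using Finset.cons_induction with
  | empty => simp
  | cons a s ha ih =>
    rw [Finset.sum_cons, Finset.prod_cons]
    have h1 : 0 ≤ g a := hg a (Finset.mem_cons_self a s)
    have h2 : ∀ i ∈ s, 0 ≤ g i := fun i hi => hg i (Finset.mem_cons_of_mem hi)
    have hs : 0 ≤ ∑ i ∈ s, g i := Finset.sum_nonneg h2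
    have h3 := ih h2
    nlinarith [mul_le_mul_of_nonneg_left h3 (by linarith : (0:ℝ) ≤ 1 + g a)]

lemma integrable_of_bdd {α : Type*} [MeasurableSpace α] {μ : Measure α} [IsFiniteMeasure μ]
    {g : α → ℝ} (hg : Measurable g) {C : ℝ} (hC : ∀ x, |g x| ≤ C) : Integrable g μ :=
  (integrable_const C).mono' hg.aestronglyMeasurable
    (ae_of_all _ fun x => by simpa [Real.norm_eq_abs] using hC x)


/-- If `H` is weakly norming with at least one edge, then `H` satisfies Sidorenko's conjecture:
`(∫ |f| dμ²)^{|E(H)|} ≤ ∫ ∏_{ij∈E(H)} |f(x_i,x_j)| dμ^{|V(H)|}` for every bounded measurable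
`f`. -/
theorem weaklyNorming_sidorenko {n : ℕ} (H : SimpleGraph (Fin n)) [DecidableRel H.Adj]
    (hWN : WeaklyNorming H) (hE : (edgePairs H).Nonempty)
    (f : ℝ → ℝ → ℝ) (hf : Measurable (Function.uncurry f)) (hb : BddFun f) :
    (∫ z in Set.Icc (0 : ℝ) 1 ×ˢ Set.Icc (0 : ℝ) 1, |f z.1 z.2|) ^ (edgePairs H).card ≤
      tAbs H f := by
  classical
  haveI := box_prob n
  obtain ⟨C0, hC0⟩ := hb
  set C : ℝ := max C0 0 with hCdef
  have hC : ∀ x y, |f x y| ≤ C := fun x y => (hC0 x y).trans (le_max_left _ _)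
  have hCnn : 0 ≤ C := le_max_right _ _
  set e := (edgePairs H).card with he'
  have he0 : e ≠ 0 := Finset.card_ne_zero.mpr hE
  have hepos : 0 < e := Finset.card_pos.mpr hE
  set I := ∫ z in Icc (0:ℝ) 1 ×ˢ Icc (0:ℝ) 1, |f z.1 z.2| with hI'
  have hInn : 0 ≤ I := integral_nonneg fun z => abs_nonneg _
  have htAbs_nonneg : ∀ g : ℝ → ℝ → ℝ, 0 ≤ tAbs H g := fun g =>
    integral_nonneg fun x => Finset.prod_nonneg fun p _ => abs_nonneg _
  set N := rNorm H f with hN'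
  have hNnn : 0 ≤ N := Real.rpow_nonneg (htAbs_nonneg f) _
  have hmeasf : ∀ p : Fin n × Fin n, Measurable fun x : Fin n → ℝ => f (x p.1) (x p.2) :=
    fun p => by
      have h0 : (fun x : Fin n → ℝ => f (x p.1) (x p.2))
          = Function.uncurry f ∘ (fun x => (x p.1, x p.2)) := rfl
      rw [h0]
      exact hf.comp ((measurable_pi_apply p.1).prodMk (measurable_pi_apply p.2))
  have hedge_ne : ∀ p ∈ edgePairs H, (p.1 : Fin n) ≠ p.2 :=
    fun p hp => ((Finset.mem_filter.mp hp).2.2).ne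
  have hsingle : ∀ p ∈ edgePairs H, (∫ x in unitBox n, |f (x p.1) (x p.2)|) = I := by
    intro p hp
    exact integral_eval_pair (hedge_ne p hp) (fun a b => |f a b|) (by exact hf.abs)
  -- lower bound
  have hlow : ∀ lam : ℝ, 0 ≤ lam →
      1 + lam * ((e : ℝ) * I) ≤ tAbs H (fun x y => 1 + lam * |f x y|) := by
    intro lam hlam
    have hmP : Measurable fun x : Fin n → ℝ =>
        ∏ p ∈ edgePairs H, abs (1 + lam * abs (f (x p.1) (x p.2))) :=
      Finset.measurable_prod _ fun p _ =>
        (measurable_const.add (measurable_const.mul (hmeasf p).abs)).abs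
    have hintP : Integrable (fun x : Fin n → ℝ =>
        ∏ p ∈ edgePairs H, abs (1 + lam * abs (f (x p.1) (x p.2))))
        (volume.restrict (unitBox n)) := by
      refine integrable_of_bdd hmP (C := (1 + lam * C) ^ e) fun x => ?_
      rw [abs_of_nonneg (Finset.prod_nonneg fun p _ => abs_nonneg _)]
      calc ∏ p ∈ edgePairs H, abs (1 + lam * abs (f (x p.1) (x p.2)))
          ≤ ∏ _p ∈ edgePairs H, (1 + lam * C) := by
            refine Finset.prod_le_prod (fun p _ => abs_nonneg _) (fun p _ => ?_)
            rw [abs_of_nonneg (add_nonneg zero_le_one (mul_nonneg hlam (abs_nonneg _)))]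
            have h5 := hC (x p.1) (x p.2)
            nlinarith [abs_nonneg (f (x p.1) (x p.2))]
        _ = (1 + lam * C) ^ e := by rw [Finset.prod_const, he']
    have hintS : Integrable (fun x : Fin n → ℝ => ∑ p ∈ edgePairs H, abs (f (x p.1) (x p.2)))
        (volume.restrict (unitBox n)) :=
      integrable_finset_sum _ fun p _ =>
        integrable_of_bdd (hmeasf p).abs (C := C) fun x => by rw [abs_abs]; exact hC _ _
    have hpt : ∀ x : Fin n → ℝ,
        1 + lam * ∑ p ∈ edgePairs H, abs (f (x p.1) (x p.2))
          ≤ ∏ p ∈ edgePairs H, abs (1 + lam * abs (f (x p.1) (x p.2))) := by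
      intro x
      have h1 : ∀ p ∈ edgePairs H, (0:ℝ) ≤ lam * abs (f (x p.1) (x p.2)) :=
        fun p _ => mul_nonneg hlam (abs_nonneg _)
      calc 1 + lam * ∑ p ∈ edgePairs H, abs (f (x p.1) (x p.2))
          = 1 + ∑ p ∈ edgePairs H, lam * abs (f (x p.1) (x p.2)) := by rw [Finset.mul_sum]
        _ ≤ ∏ p ∈ edgePairs H, (1 + lam * abs (f (x p.1) (x p.2))) :=
            one_add_sum_le_prod' _ _ h1
        _ = ∏ p ∈ edgePairs H, abs (1 + lam * abs (f (x p.1) (x p.2))) :=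
            Finset.prod_congr rfl fun p hp =>
              (abs_of_nonneg (add_nonneg zero_le_one (h1 p hp))).symm
    have hmono : (∫ x in unitBox n, (1 + lam * ∑ p ∈ edgePairs H, abs (f (x p.1) (x p.2))))
        ≤ tAbs H (fun x y => 1 + lam * |f x y|) := by
      have h6 := integral_mono ((integrable_const (1:ℝ)).add (hintS.const_mul lam)) hintP hpt
      simpa [tAbs] using h6
    refine le_trans (le_of_eq ?_) hmono
    rw [integral_add (integrable_const 1) (hintS.const_mul lam), integral_const,
      integral_const_mul, integral_finset_sum _ (fun p _ =>
        integrable_of_bdd (hmeasf p).abs (C := C) fun x => by rw [abs_abs]; exact hC _ _),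
      Finset.sum_congr rfl hsingle, Finset.sum_const, nsmul_eq_mul, ← he']
    simp
  -- upper bound pieces
  have hrNorm_one : rNorm H (fun _ _ => (1:ℝ)) = 1 := by
    have h1 : tAbs H (fun _ _ => (1:ℝ)) = 1 := by simp [tAbs]
    rw [rNorm, h1, Real.one_rpow]
  have htAbs_smul : ∀ lam : ℝ, 0 ≤ lam →
      tAbs H (fun x y => lam * |f x y|) = lam ^ e * tAbs H f := by
    intro lam hlam
    have h1 : ∀ x : Fin n → ℝ,
        ∏ p ∈ edgePairs H, abs (lam * abs (f (x p.1) (x p.2)))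
          = lam ^ e * ∏ p ∈ edgePairs H, abs (f (x p.1) (x p.2)) := by
      intro x
      simp_rw [abs_mul, abs_abs, abs_of_nonneg hlam]
      rw [Finset.prod_mul_distrib, Finset.prod_const, he']
    simp only [tAbs]
    simp_rw [h1]
    rw [integral_const_mul]
  have hrNorm_smul : ∀ lam : ℝ, 0 ≤ lam →
      rNorm H (fun x y => lam * |f x y|) = lam * N := by
    intro lam hlam
    rw [rNorm, htAbs_smul lam hlam,
      Real.mul_rpow (pow_nonneg hlam e) (htAbs_nonneg f)]
    rw [hN', rNorm, ← he']
    congr 1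
    rw [← Real.rpow_natCast lam e, ← Real.rpow_mul hlam,
      mul_inv_cancel₀ (by exact_mod_cast he0), Real.rpow_one]
  have htri : ∀ lam : ℝ, 0 ≤ lam →
      rNorm H (fun x y => 1 + lam * |f x y|) ≤ 1 + lam * N := by
    intro lam hlam
    have h2 := hWN.1 (fun _ _ => 1) (fun x y => lam * |f x y|) measurable_const
      (by exact measurable_const.mul hf.abs) ⟨1, by norm_num⟩
      ⟨lam * C, fun x y => by
        rw [abs_mul, abs_of_nonneg hlam, abs_abs]
        exact mul_le_mul_of_nonneg_left (hC x y) hlam⟩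
    rw [hrNorm_one, hrNorm_smul lam hlam] at h2
    exact h2
  have hup : ∀ lam : ℝ, 0 ≤ lam →
      tAbs H (fun x y => 1 + lam * |f x y|) ≤ (1 + lam * N) ^ e := by
    intro lam hlam
    have h1 : tAbs H (fun x y => 1 + lam * |f x y|)
        = (rNorm H (fun x y => 1 + lam * |f x y|)) ^ e := by
      rw [rNorm, ← he', ← Real.rpow_natCast (tAbs H (fun x y => 1 + lam * |f x y|) ^ ((e:ℝ)⁻¹)) e,
        ← Real.rpow_mul (htAbs_nonneg _), inv_mul_cancel₀ (by exact_mod_cast he0),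
        Real.rpow_one]
    rw [h1]
    exact pow_le_pow_left₀ (Real.rpow_nonneg (htAbs_nonneg _) _) (htri lam hlam) e
  -- derivative / slope argument
  have hIN : I ≤ N := by
    have hD : HasDerivAt (fun lam : ℝ => (1 + lam * N) ^ e) ((e : ℝ) * N) 0 := by
      have h1 : HasDerivAt (fun lam : ℝ => 1 + lam * N) N 0 :=
        (hasDerivAt_mul_const N).const_add 1
      have h2 := h1.pow e
      exact (by simpa using h2 : HasDerivAt ((fun lam : ℝ => 1 + lam * N) ^ e) ((e : ℝ) * N) 0)
    have hslope := hasDerivAt_iff_tendsto_slope.mp hD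
    have hslope' : Filter.Tendsto (slope (fun lam : ℝ => (1 + lam * N) ^ e) 0)
        (nhdsWithin 0 (Ioi 0)) (nhds ((e:ℝ) * N)) :=
      hslope.mono_left (nhdsWithin_mono 0 fun x hx => ne_of_gt hx)
    have hIN' : (e:ℝ) * I ≤ (e:ℝ) * N := by
      refine ge_of_tendsto hslope' ?_
      filter_upwards [self_mem_nhdsWithin] with lam hlam
      have hlam0 : (0:ℝ) < lam := hlam
      have h2 := (hlow lam hlam0.le).trans (hup lam hlam0.le)
      have h3 : slope (fun lam : ℝ => (1 + lam * N) ^ e) 0 lam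
          = ((1 + lam * N) ^ e - 1) / lam := by
        rw [slope_def_field]; simp
      rw [h3, le_div_iff₀ hlam0]
      nlinarith
    exact le_of_mul_le_mul_left hIN' (by exact_mod_cast hepos)
  calc I ^ e ≤ N ^ e := pow_le_pow_left₀ hInn hIN e
    _ = tAbs H f := by
      rw [hN', rNorm, ← he', ← Real.rpow_natCast (tAbs H f ^ ((e:ℝ)⁻¹)) e,
        ← Real.rpow_mul (htAbs_nonneg f), inv_mul_cancel₀ (by exact_mod_cast he0),
        Real.rpow_one]
end

section
/- A graph H with at least one edge that is weakly norming must be bipartite. -/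
open MeasureTheory

/-- A graph with at least one edge that is weakly norming must be bipartite
(i.e. 2-colorable). -/
theorem weaklyNorming_bipartite {n : ℕ} (H : SimpleGraph (Fin n)) [DecidableRel H.Adj]
    (hWN : WeaklyNorming H) (hE : (edgePairs H).Nonempty) :
    H.Colorable 2 := by
  by_contra hcol
  set g : ℝ → ℝ → ℝ := fun x y => if (x ≤ 2⁻¹ ↔ y ≤ 2⁻¹) then 0 else 1 with hg
  have hmeas : Measurable (Function.uncurry g) := by
    have hS : MeasurableSet {p : ℝ × ℝ | p.1 ≤ 2⁻¹ ↔ p.2 ≤ 2⁻¹} := by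
      have heq : {p : ℝ × ℝ | p.1 ≤ 2⁻¹ ↔ p.2 ≤ 2⁻¹} =
          ({p : ℝ × ℝ | p.1 ≤ 2⁻¹} ∩ {p : ℝ × ℝ | p.2 ≤ 2⁻¹}) ∪
          ({p : ℝ × ℝ | p.1 ≤ 2⁻¹}ᶜ ∩ {p : ℝ × ℝ | p.2 ≤ 2⁻¹}ᶜ) := by
        ext p
        by_cases h1 : p.1 ≤ (2⁻¹ : ℝ) <;> by_cases h2 : p.2 ≤ (2⁻¹ : ℝ) <;>
          simp [h1, h2]
      rw [heq]
      exact (((measurableSet_le measurable_fst measurable_const).inter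
        (measurableSet_le measurable_snd measurable_const)).union
        (((measurableSet_le measurable_fst measurable_const).compl).inter
        ((measurableSet_le measurable_snd measurable_const).compl)))
    exact Measurable.ite hS measurable_const measurable_const
  have hbdd : BddFun g := by
    refine ⟨1, fun x y => ?_⟩
    by_cases h : (x ≤ (2⁻¹ : ℝ) ↔ y ≤ (2⁻¹ : ℝ)) <;> simp [hg, h]
  have hprod : ∀ x : Fin n → ℝ, ∏ p ∈ edgePairs H, |g (x p.1) (x p.2)| = 0 := by
    intro x
    by_contra hne
    apply hcol
    have key : ∀ p ∈ edgePairs H, (x p.1 ≤ (2⁻¹ : ℝ) ↔ x p.2 ≤ (2⁻¹ : ℝ)) → False := by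
      intro p hp hiff
      exact hne (Finset.prod_eq_zero hp (by simp [hg, hiff]))
    refine ⟨SimpleGraph.Coloring.mk
      (fun i => if x i ≤ (2⁻¹ : ℝ) then (0 : Fin 2) else 1) ?_⟩
    intro i j hadj heq
    have hij : (x i ≤ (2⁻¹ : ℝ) ↔ x j ≤ (2⁻¹ : ℝ)) := by
      by_cases h1 : x i ≤ (2⁻¹ : ℝ) <;> by_cases h2 : x j ≤ (2⁻¹ : ℝ) <;>
        simp only [h1, h2, if_true, if_false] at heq ⊢ <;>
        first
          | tauto
          | exact absurd heq (by decide)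
    rcases lt_trichotomy i j with h | h | h
    · exact key (i, j) (by simp [edgePairs, hadj, h]) hij
    · exact H.loopless.irrefl i (h ▸ hadj)
    · exact key (j, i) (by simp [edgePairs, hadj.symm, h]) hij.symm
  have htabs : tAbs H g = 0 := by
    unfold tAbs
    simp [hprod]
  have hcard : ((edgePairs H).card : ℝ) ≠ 0 :=
    Nat.cast_ne_zero.2 (Finset.card_ne_zero_of_mem hE.choose_spec)
  have hr : rNorm H g = 0 := by
    unfold rNorm
    rw [htabs, Real.zero_rpow (inv_ne_zero hcard)]
  have hae := hWN.2 g hmeas hbdd hr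
  have hnull : volume.restrict (Set.Icc (0 : ℝ) 1 ×ˢ Set.Icc (0 : ℝ) 1)
      {z : ℝ × ℝ | ¬ g z.1 z.2 = 0} = 0 := MeasureTheory.ae_iff.1 hae
  have hsub : (Set.Icc (0 : ℝ) 2⁻¹ ×ˢ Set.Ioc (2⁻¹ : ℝ) 1) ⊆
      {z : ℝ × ℝ | ¬ g z.1 z.2 = 0} := by
    rintro ⟨a, b⟩ ⟨ha, hb⟩
    have h1 : a ≤ (2⁻¹ : ℝ) := ha.2
    have h2 : ¬ b ≤ (2⁻¹ : ℝ) := not_le.2 hb.1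
    simp [hg, h1, h2]
  have hsubsq : (Set.Icc (0 : ℝ) 2⁻¹ ×ˢ Set.Ioc (2⁻¹ : ℝ) 1) ⊆
      (Set.Icc (0 : ℝ) 1 ×ˢ Set.Icc (0 : ℝ) 1) := by
    rintro ⟨a, b⟩ ⟨ha, hb⟩
    exact ⟨⟨ha.1, ha.2.trans (by norm_num)⟩,
      ⟨(by norm_num : (0:ℝ) ≤ 2⁻¹).trans hb.1.le, hb.2⟩⟩
  have hle : volume.restrict (Set.Icc (0 : ℝ) 1 ×ˢ Set.Icc (0 : ℝ) 1)
      (Set.Icc (0 : ℝ) 2⁻¹ ×ˢ Set.Ioc (2⁻¹ : ℝ) 1) = 0 :=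
    le_antisymm (hnull ▸ measure_mono hsub) zero_le
  have hrectmeas : MeasurableSet (Set.Icc (0 : ℝ) 2⁻¹ ×ˢ Set.Ioc (2⁻¹ : ℝ) 1) :=
    measurableSet_Icc.prod measurableSet_Ioc
  rw [Measure.restrict_apply hrectmeas, Set.inter_eq_left.2 hsubsq] at hle
  rw [show (volume : Measure (ℝ × ℝ)) = (volume : Measure ℝ).prod volume from rfl,
    Measure.prod_prod, Real.volume_Icc, Real.volume_Ioc] at hle
  simp only [mul_eq_zero, ENNReal.ofReal_eq_zero] at hle
  rcases hle with h | h <;> norm_num at h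
end

section
/- Let f : [0,1]² → ℝ be bounded measurable and define ‖f‖_{C_4} = (∫ f(x,y)f(x,y')f(x',y)f(x',y') dx dx' dy dy')^{1/4} and the cut norm ‖f‖_□ = sup |∫ f(x,y)u(x)v(y) dx dy| over measurable u, v : [0,1] → [-1,1]. Then ‖f‖_□ ≤ ‖f‖_{C_4}. -/
open MeasureTheory

section helpers
variable {α : Type*} {mα : MeasurableSpace α} {μ : Measure α}

lemma bdd_integrable [IsFiniteMeasure μ] {G : α → ℝ} (hG : Measurable G) {C : ℝ}
    (hC : ∀ x, |G x| ≤ C) : Integrable G μ :=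
  ⟨hG.aestronglyMeasurable, HasFiniteIntegral.of_bounded (C := C) (ae_of_all _ hC)⟩

lemma bdd_memL2 [IsFiniteMeasure μ] {G : α → ℝ} (hG : Measurable G) {C : ℝ}
    (hC : ∀ x, |G x| ≤ C) : MemLp G 2 μ :=
  MemLp.of_bound hG.aestronglyMeasurable C (ae_of_all _ hC)

lemma cs {a b : α → ℝ} (ha : MemLp a 2 μ) (hb : MemLp b 2 μ) :
    |∫ x, a x * b x ∂μ| ≤ (∫ x, a x ^ 2 ∂μ) ^ ((1:ℝ)/2) * (∫ x, b x ^ 2 ∂μ) ^ ((1:ℝ)/2) := by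
  have hpq : Real.HolderConjugate 2 2 := ⟨by norm_num, by norm_num, by norm_num⟩
  have h2 : (ENNReal.ofReal (2:ℝ)) = 2 := by norm_num [ENNReal.ofReal_ofNat]
  have h := integral_mul_norm_le_Lp_mul_Lq hpq (h2 ▸ ha) (h2 ▸ hb)
  have habs : |∫ x, a x * b x ∂μ| ≤ ∫ x, ‖a x‖ * ‖b x‖ ∂μ := by
    rw [← Real.norm_eq_abs]
    refine (norm_integral_le_integral_norm _).trans_eq ?_
    congr 1; ext x; rw [norm_mul]
  have e1 : ∀ c : ℝ, ‖c‖ ^ (2:ℝ) = c ^ 2 := fun c => by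
    rw [show (2:ℝ) = ((2:ℕ):ℝ) by norm_num, Real.rpow_natCast]; simp [sq_abs]
  simp_rw [e1] at h
  exact habs.trans h

/-- one-sided CS with a [-1,1]-bounded first factor -/
lemma cs_one [IsFiniteMeasure μ] {w b : α → ℝ} (hw : Measurable w) (hw1 : ∀ x, |w x| ≤ 1)
    (hb : MemLp b 2 μ) (hμ1 : (μ Set.univ).toReal ≤ 1) :
    |∫ x, w x * b x ∂μ| ≤ (∫ x, b x ^ 2 ∂μ) ^ ((1:ℝ)/2) := by
  have h := cs (bdd_memL2 hw hw1) hb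
  have hw2 : (∫ x, w x ^ 2 ∂μ) ≤ 1 := by
    have : ∫ x, w x ^ 2 ∂μ ≤ ∫ _x, (1:ℝ) ∂μ := by
      refine integral_mono (bdd_integrable (hw.pow_const 2) (C := 1) ?_) (integrable_const 1) ?_
      · intro x; rw [abs_pow, sq_abs, ← sq_abs]; nlinarith [hw1 x, abs_nonneg (w x)]
      · intro x; simp only []; rw [← sq_abs]; nlinarith [hw1 x, abs_nonneg (w x)]
    simpa using this.trans (by simpa [Measure.real] using hμ1)
  have h1 : (∫ x, w x ^ 2 ∂μ) ^ ((1:ℝ)/2) ≤ 1 :=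
    Real.rpow_le_one (integral_nonneg fun x => sq_nonneg _) hw2 (by norm_num)
  have h2 : (0:ℝ) ≤ (∫ x, b x ^ 2 ∂μ) ^ ((1:ℝ)/2) :=
    Real.rpow_nonneg (integral_nonneg fun x => sq_nonneg _) _
  nlinarith [h]
end helpers


lemma smeas_int {α β : Type*} {mα : MeasurableSpace α} {mβ : MeasurableSpace β}
    {μ : Measure β} [SFinite μ] {F : α × β → ℝ} (hF : Measurable F) :
    Measurable fun x : α => ∫ y, F (x, y) ∂μ :=
  (StronglyMeasurable.integral_prod_right' (f := F) hF.stronglyMeasurable).measurable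

/-- `‖f‖_{C₄}⁴ = ∫ f(x,y) f(x,y') f(x',y) f(x',y') dx dx' dy dy'` over `[0,1]⁴`. -/
noncomputable def tC4 (f : ℝ → ℝ → ℝ) : ℝ :=
  ∫ x in Set.Icc (0 : ℝ) 1, ∫ x' in Set.Icc (0 : ℝ) 1,
    ∫ y in Set.Icc (0 : ℝ) 1, ∫ y' in Set.Icc (0 : ℝ) 1,
      f x y * f x y' * f x' y * f x' y'

/-- The cut norm is at most the `C₄`-norm: for every bounded measurable `f : [0,1]² → ℝ` and
all measurable `u, v : [0,1] → [-1,1]`,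
`|∫ f(x,y) u(x) v(y) dx dy| ≤ (tC4 f)^{1/4}`; hence `‖f‖_□ ≤ ‖f‖_{C₄}`. -/
theorem cutNorm_le_C4Norm (f : ℝ → ℝ → ℝ)
    (hmeas : Measurable (Function.uncurry f))
    (hbdd : ∃ C : ℝ, ∀ x y, |f x y| ≤ C)
    (u v : ℝ → ℝ) (hu : Measurable u) (hv : Measurable v)
    (hu1 : ∀ x, |u x| ≤ 1) (hv1 : ∀ y, |v y| ≤ 1) :
    |∫ x in Set.Icc (0 : ℝ) 1, ∫ y in Set.Icc (0 : ℝ) 1, f x y * u x * v y| ≤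
      tC4 f ^ ((1 : ℝ) / 4) := by
  obtain ⟨C, hC⟩ := hbdd
  have hC0 : 0 ≤ C := (abs_nonneg _).trans (hC 0 0)
  set μ : Measure ℝ := volume.restrict (Set.Icc 0 1) with hμ
  have hprob : IsProbabilityMeasure μ := ⟨by simp [hμ, Real.volume_Icc]⟩
  have hμ1 : (μ Set.univ).toReal ≤ 1 := by simp
  set ν : Measure (ℝ × ℝ) := μ.prod μ with hν
  have hν1 : (ν Set.univ).toReal ≤ 1 := by simp
  -- the function g x = ∫ y, f x y * v y
  set g : ℝ → ℝ := fun x => ∫ y, f x y * v y ∂μ with hg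
  have hgm : Measurable g :=
    smeas_int (F := fun p : ℝ × ℝ => f p.1 p.2 * v p.2) (by fun_prop)
  have hfv : ∀ x y, |f x y * v y| ≤ C := fun x y => by
    rw [abs_mul]
    calc |f x y| * |v y| ≤ C * 1 := mul_le_mul (hC x y) (hv1 y) (abs_nonneg _) hC0
    _ = C := mul_one C
  have hgb : ∀ x, |g x| ≤ C := by
    intro x
    rw [← Real.norm_eq_abs]
    calc ‖g x‖ ≤ C * (μ Set.univ).toReal :=
      norm_integral_le_of_norm_le_const (ae_of_all _ fun y => by
        rw [Real.norm_eq_abs]; exact hfv x y)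
    _ = C := by simp
  -- step 1
  have hI : (∫ x, ∫ y, f x y * u x * v y ∂μ ∂μ) = ∫ x, u x * g x ∂μ := by
    refine integral_congr_ae (ae_of_all _ fun x => ?_)
    simp only [hg]
    rw [← integral_const_mul]
    congr 1; ext y; ring
  -- the function h p = ∫ x, f x p.1 * f x p.2
  set h : ℝ × ℝ → ℝ := fun p => ∫ x, f x p.1 * f x p.2 ∂μ with hh
  have hhm : Measurable h :=
    smeas_int (F := fun q : (ℝ × ℝ) × ℝ => f q.2 q.1.1 * f q.2 q.1.2) (by fun_prop)
  have hff : ∀ x y y', |f x y * f x y'| ≤ C * C := fun x y y' => by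
    rw [abs_mul]; exact mul_le_mul (hC x y) (hC x y') (abs_nonneg _) hC0
  have hhb : ∀ p, |h p| ≤ C * C := by
    intro p
    rw [← Real.norm_eq_abs]
    calc ‖h p‖ ≤ C * C * (μ Set.univ).toReal :=
      norm_integral_le_of_norm_le_const (ae_of_all _ fun x => by
        rw [Real.norm_eq_abs]; exact hff x p.1 p.2)
    _ = C * C := by simp
  -- step 2 : ∫ g² = ∫ v v' h
  have hB : (∫ x, g x ^ 2 ∂μ) = ∫ p, (v p.1 * v p.2) * h p ∂ν := by
    have e1 : ∀ x, g x ^ 2 = ∫ p : ℝ × ℝ, (f x p.1 * v p.1) * (f x p.2 * v p.2) ∂ν := by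
      intro x
      rw [sq, hg, hν, ← integral_prod_mul]
    simp_rw [e1]
    rw [integral_integral_swap]
    · refine integral_congr_ae (ae_of_all _ fun p => ?_)
      simp only [hh]
      rw [← integral_const_mul]
      congr 1; ext x; ring
    · refine bdd_integrable (μ := μ.prod ν)
        (G := Function.uncurry fun x (p : ℝ × ℝ) => (f x p.1 * v p.1) * (f x p.2 * v p.2))
        (by fun_prop) (C := C * C) ?_
      rintro ⟨x, p⟩
      simp only [Function.uncurry_apply_pair]
      rw [abs_mul]
      exact mul_le_mul (hfv x p.1) (hfv x p.2) (abs_nonneg _) hC0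
  -- step 3 : ∫ h² = tC4 f
  have hT : (∫ p, h p ^ 2 ∂ν) = tC4 f := by
    have e1 : ∀ p : ℝ × ℝ,
        h p ^ 2 = ∫ q : ℝ × ℝ, (f q.1 p.1 * f q.1 p.2) * (f q.2 p.1 * f q.2 p.2) ∂ν := by
      intro p
      rw [sq, hh, hν, ← integral_prod_mul]
    have hΦint : Integrable
        (Function.uncurry fun (p q : ℝ × ℝ) => (f q.1 p.1 * f q.1 p.2) * (f q.2 p.1 * f q.2 p.2))
        (ν.prod ν) := by
      refine bdd_integrable (by fun_prop) (C := C * C * (C * C)) ?_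
      rintro ⟨p, q⟩
      simp only [Function.uncurry_apply_pair]
      rw [abs_mul]
      exact mul_le_mul (hff q.1 p.1 p.2) (hff q.2 p.1 p.2) (abs_nonneg _) (by positivity)
    simp_rw [e1]
    rw [integral_integral_swap hΦint]
    rw [tC4, ← hμ]
    have inner : ∀ x x' : ℝ,
        (∫ y, ∫ y', f x y * f x y' * f x' y * f x' y' ∂μ ∂μ) =
          ∫ p : ℝ × ℝ, (f x p.1 * f x' p.1) * (f x p.2 * f x' p.2) ∂ν := by
      intro x x'
      rw [hν, integral_prod_mul (f := fun y => f x y * f x' y) (g := fun y' => f x y' * f x' y'),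
        ← integral_mul_const]
      refine integral_congr_ae (ae_of_all _ fun y => ?_)
      beta_reduce
      rw [← integral_const_mul]
      congr 1; ext y'; ring
    have hFint : Integrable
        (fun q : ℝ × ℝ => ∫ p : ℝ × ℝ, (f q.1 p.1 * f q.2 p.1) * (f q.1 p.2 * f q.2 p.2) ∂ν)
        (μ.prod μ) := by
      refine bdd_integrable ?_ (C := C * C * (C * C)) ?_
      · exact smeas_int (F := fun z : (ℝ × ℝ) × (ℝ × ℝ) =>
          (f z.1.1 z.2.1 * f z.1.2 z.2.1) * (f z.1.1 z.2.2 * f z.1.2 z.2.2)) (by fun_prop)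
      · intro q
        rw [← Real.norm_eq_abs]
        calc ‖_‖ ≤ C * C * (C * C) * (ν Set.univ).toReal :=
          norm_integral_le_of_norm_le_const (ae_of_all _ fun p => by
            rw [Real.norm_eq_abs, abs_mul]
            have b1 : |f q.1 p.1 * f q.2 p.1| ≤ C * C := by
              rw [abs_mul]; exact mul_le_mul (hC _ _) (hC _ _) (abs_nonneg _) hC0
            have b2 : |f q.1 p.2 * f q.2 p.2| ≤ C * C := by
              rw [abs_mul]; exact mul_le_mul (hC _ _) (hC _ _) (abs_nonneg _) hC0
            exact mul_le_mul b1 b2 (abs_nonneg _) (by positivity))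
        _ = C * C * (C * C) := by simp
    calc (∫ q : ℝ × ℝ, ∫ p : ℝ × ℝ,
            (f q.1 p.1 * f q.1 p.2) * (f q.2 p.1 * f q.2 p.2) ∂ν ∂ν)
        = ∫ q : ℝ × ℝ, ∫ p : ℝ × ℝ,
            (f q.1 p.1 * f q.2 p.1) * (f q.1 p.2 * f q.2 p.2) ∂ν ∂ν := by
          refine integral_congr_ae (ae_of_all _ fun q => ?_)
          refine integral_congr_ae (ae_of_all _ fun p => ?_)
          ring
      _ = ∫ x, ∫ x', ∫ p : ℝ × ℝ, (f x p.1 * f x' p.1) * (f x p.2 * f x' p.2) ∂ν ∂μ ∂μ := by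
          rw [hν, integral_prod _ hFint]
      _ = ∫ x, ∫ x', ∫ y, ∫ y', f x y * f x y' * f x' y * f x' y' ∂μ ∂μ ∂μ ∂μ := by
          refine integral_congr_ae (ae_of_all _ fun x => ?_)
          refine integral_congr_ae (ae_of_all _ fun x' => ?_)
          exact (inner x x').symm
  -- putting it together
  have hTnn : 0 ≤ tC4 f := hT ▸ integral_nonneg fun p => sq_nonneg _
  have hBnn : 0 ≤ ∫ x, g x ^ 2 ∂μ := integral_nonneg fun x => sq_nonneg _
  have step1 : |∫ x, ∫ y, f x y * u x * v y ∂μ ∂μ| ≤ (∫ x, g x ^ 2 ∂μ) ^ ((1:ℝ)/2) := by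
    rw [hI]
    exact cs_one hu hu1 (bdd_memL2 hgm hgb) hμ1
  have step2 : (∫ x, g x ^ 2 ∂μ) ≤ (∫ p, h p ^ 2 ∂ν) ^ ((1:ℝ)/2) := by
    rw [hB]
    calc (∫ p, (v p.1 * v p.2) * h p ∂ν) ≤ |∫ p, (v p.1 * v p.2) * h p ∂ν| := le_abs_self _
      _ ≤ (∫ p, h p ^ 2 ∂ν) ^ ((1:ℝ)/2) := by
          refine cs_one (by fun_prop) ?_ (bdd_memL2 hhm hhb) hν1
          intro p
          rw [abs_mul]
          calc |v p.1| * |v p.2| ≤ 1 * 1 :=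
            mul_le_mul (hv1 _) (hv1 _) (abs_nonneg _) zero_le_one
          _ = 1 := mul_one 1
  have step3 : (∫ x, g x ^ 2 ∂μ) ^ ((1:ℝ)/2) ≤ tC4 f ^ ((1:ℝ)/4) := by
    calc (∫ x, g x ^ 2 ∂μ) ^ ((1:ℝ)/2) ≤ ((∫ p, h p ^ 2 ∂ν) ^ ((1:ℝ)/2)) ^ ((1:ℝ)/2) :=
      Real.rpow_le_rpow hBnn step2 (by norm_num)
    _ = (tC4 f ^ ((1:ℝ)/2)) ^ ((1:ℝ)/2) := by rw [hT]
    _ = tC4 f ^ ((1:ℝ)/4) := by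
        rw [← Real.rpow_mul hTnn]; norm_num
  exact step1.trans step3
end

section
/- Let W be a finite Coxeter group with simple reflections S = {s_1,…,s_k}, length function ℓ, and folding operation K ↦ K⁺(s) defined by K⁺(s) = {w ∈ W : s₊w ∈ K}, where s₊w = sw if ℓ(sw) < ℓ(w) and s₊w = w otherwise. Then there exists a finite sequence K_0 = {e}, K_1, …, K_N = W of subsets of W such that for each i there is a simple reflection s with K_{i+1} = K_i⁺(s). -/
/-! Fold `K ↦ K⁺(s)` is the preimage of `K` under the descent map `s₊`, so folding `{1}` along a
word `b₁ ⋯ b_N` gives the set of `w` sent to `1` by the composite of the descent maps. Each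
`s₊` does not increase length, and when `w ≠ 1` some left descent strictly decreases it; since
`W` is finite, the total length `∑_w ℓ(g w)` of the current composite `g` can be strictly
decreased until it vanishes, giving a word whose composite sends all of `W` to `1`. -/

theorem List.foldr_take_succ {α β : Type*} (f : α → β → β) (l : List α) {i : ℕ}
    (hi : i < l.length) (x : β) :
    (l.take (i + 1)).foldr f x = (l.take i).foldr f (f l[i] x) := by
  rw [List.take_succ_eq_append_getElem hi, List.foldr_append, List.foldr_cons, List.foldr_nil]

theorem exists_foldr_potential_eq_zero {ι α : Type*} [Finite α] (φ : α → ℕ) (f : ι → α → α)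
    (hle : ∀ b x, φ (f b x) ≤ φ x) (hlt : ∀ x, φ x ≠ 0 → ∃ b, φ (f b x) < φ x) :
    ∃ l : List ι, ∀ x, φ (l.foldr f x) = 0 := by
  have := Fintype.ofFinite α
  suffices h : ∀ n (g : α → α), ∑ x, φ (g x) = n → ∃ l : List ι, ∀ x, φ (l.foldr f (g x)) = 0 from
    h _ id rfl
  intro n
  induction n using Nat.strong_induction_on with
  | _ n ih =>
    rintro g rfl
    by_cases hzero : ∀ x, φ (g x) = 0
    · exact ⟨[], hzero⟩
    obtain ⟨x₀, hx₀⟩ := not_forall.mp hzero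
    obtain ⟨b, hb⟩ := hlt _ hx₀
    have hsum : ∑ x, φ (f b (g x)) < ∑ x, φ (g x) :=
      Finset.sum_lt_sum (fun x _ => hle b (g x)) ⟨x₀, Finset.mem_univ _, hb⟩
    obtain ⟨l, hl⟩ := ih _ hsum (f b ∘ g) rfl
    exact ⟨l ++ [b], fun x => by simpa [List.foldr_append] using hl x⟩

namespace CoxeterSystem

variable {B W : Type*} [Group W] {M : CoxeterMatrix B} (cs : CoxeterSystem M W)

/-- The descent map `s₊`. -/
noncomputable def descend (b : B) (w : W) : W :=
  if cs.length (cs.simple b * w) < cs.length w then cs.simple b * w else w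

theorem length_descend_le (b : B) (w : W) : cs.length (cs.descend b w) ≤ cs.length w := by
  unfold descend
  split_ifs with h
  exacts [h.le, le_rfl]

theorem length_descend_lt {b : B} {w : W} (h : cs.IsLeftDescent w b) :
    cs.length (cs.descend b w) < cs.length w := by
  have h' : cs.length (cs.simple b * w) < cs.length w := h
  rwa [descend, if_pos h']

theorem exists_foldr_descend_eq_one [Finite W] : ∃ l : List B, ∀ w, l.foldr cs.descend w = 1 := by
  obtain ⟨l, hl⟩ := exists_foldr_potential_eq_zero cs.length cs.descend cs.length_descend_le
    fun w hw => (cs.exists_leftDescent_of_ne_one (mt cs.length_eq_zero_iff.mpr hw)).imp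
      fun _ => cs.length_descend_lt
  exact ⟨l, fun w => cs.length_eq_zero_iff.mp (hl w)⟩

end CoxeterSystem

/-- Let `W` be a finite Coxeter group with simple reflections `S`, length function `ℓ`, and
folding operation `K ↦ K⁺(s) = {w : s₊w ∈ K}`, where `s₊w = sw` if `ℓ(sw) < ℓ(w)` and
`s₊w = w` otherwise. Then there is a finite sequence `K₀ = {e}, K₁, …, K_N = W` of subsets of
`W` such that each `K_{i+1}` is `K_i⁺(s)` for some simple reflection `s`. -/
theorem exists_percolating_fold_sequence {B : Type*} {W : Type*} [Group W] [Finite W]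
    (M : CoxeterMatrix B) (cs : CoxeterSystem M W) :
    ∃ (N : ℕ) (K : ℕ → Set W),
      K 0 = {1} ∧ K N = Set.univ ∧
      ∀ i < N, ∃ b : B, K (i + 1) =
        {w : W |
          (if cs.length (cs.simple b * w) < cs.length w then cs.simple b * w else w) ∈ K i} := by
  obtain ⟨l, hl⟩ := cs.exists_foldr_descend_eq_one
  refine ⟨l.length, fun i => {w | (l.take i).foldr cs.descend w = 1}, rfl, ?_, fun i hi => ?_⟩
  · simp [hl]
  · refine ⟨l[i], Set.ext fun w => ?_⟩
    simp only [Set.mem_ofPred_eq, List.foldr_take_succ _ _ hi]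
    rfl
end

section
/- Let W be a Coxeter group with simple reflections S = {s_1,…,s_k}, let U_L = {w ∈ W : ℓ(w) ≤ L}, and for 1 ≤ i ≤ k set U_{L+1,i} = {w ∈ W : s_i w ∈ U_L} and W_{L+1,j} = U_L ∪ U_{L+1,1} ∪ ⋯ ∪ U_{L+1,j}. Then (a) each W_{L+1,j} is a stack, (b) U_{L+1,j+1} ⊆ W_{L+1,j}⁺(s_{j+1}) for each 0 ≤ j ≤ k-1, and (c) W_{L+1,k} = {w ∈ W : ℓ(w) ≤ L+1}. -/
/-!
Every `W_{L+1,j}` lies between the balls `{ℓ ≤ L}` and `{ℓ ≤ L+1}`, and any set squeezed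
between them is a stack: a left descent of an element of length at most `L + 1` has length at
most `L`. For (b), the folded element `s₊ w` is no longer than `s w`, which lies in `U_L`.
For (c), an element of length `L + 1` has a left descent `s_i`, and then `s_i w ∈ U_L`.
-/

namespace CoxeterSystem

variable {B W : Type*} [Group W] {M : CoxeterMatrix B} (cs : CoxeterSystem M W)

def IsStack (U : Set W) : Prop :=
  ∀ w ∈ U, ∀ i, cs.length (cs.simple i * w) < cs.length w → cs.simple i * w ∈ U

noncomputable def fold (i : B) (w : W) : W :=
  if cs.length (cs.simple i * w) < cs.length w then cs.simple i * w else w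

theorem length_le_length_simple_mul_add_one (w : W) (i : B) :
    cs.length w ≤ cs.length (cs.simple i * w) + 1 := by
  simpa only [length_simple] using cs.length_le_length_mul_add_left (cs.simple i) w

theorem length_fold_le (i : B) (w : W) :
    cs.length (cs.fold i w) ≤ cs.length (cs.simple i * w) := by
  unfold fold
  split_ifs <;> omega

theorem isStack_of_subset {U : Set W} {L : ℕ} (hle : {w | cs.length w ≤ L} ⊆ U)
    (hge : U ⊆ {w | cs.length w ≤ L + 1}) : cs.IsStack U := by
  intro w hw i hi
  have hw' : cs.length w ≤ L + 1 := hge hw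
  have hdesc : cs.length (cs.simple i * w) + 1 = cs.length w := cs.isLeftDescent_iff.mp hi
  exact hle (show cs.length (cs.simple i * w) ≤ L by omega)

theorem setOf_length_le_succ (L : ℕ) :
    {w | cs.length w ≤ L + 1} =
      {w | cs.length w ≤ L} ∪ ⋃ i, {w | cs.length (cs.simple i * w) ≤ L} := by
  ext w
  simp only [Set.mem_ofPred_eq, Set.mem_union, Set.mem_iUnion]
  constructor
  · intro hw
    rcases le_or_gt (cs.length w) L with hL | hL
    · exact Or.inl hL
    have hne : w ≠ 1 := by
      rintro rfl
      simp at hL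
    obtain ⟨i, hi⟩ := cs.exists_leftDescent_of_ne_one hne
    have hdesc : cs.length (cs.simple i * w) + 1 = cs.length w := cs.isLeftDescent_iff.mp hi
    exact Or.inr ⟨i, by omega⟩
  · rintro (hw | ⟨i, hw⟩)
    · omega
    · have := cs.length_le_length_simple_mul_add_one w i
      omega

end CoxeterSystem

/-- Let `W` be a Coxeter group with simple reflections `s_1, …, s_k`, let
`U_L = {w : ℓ(w) ≤ L}`, `U_{L+1,i} = {w : s_i w ∈ U_L}` and
`W_{L+1,j} = U_L ∪ U_{L+1,1} ∪ ⋯ ∪ U_{L+1,j}`. Then (a) each `W_{L+1,j}` is a stack,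
(b) `U_{L+1,j+1} ⊆ W_{L+1,j}⁺(s_{j+1})` for each `0 ≤ j ≤ k-1`, and
(c) `W_{L+1,k} = {w : ℓ(w) ≤ L+1}`. -/
theorem stacks_fold_step {k : ℕ} {W : Type*} [Group W]
    (M : CoxeterMatrix (Fin k)) (cs : CoxeterSystem M W) (L : ℕ)
    (UL : Set W) (hUL : UL = {w : W | cs.length w ≤ L})
    (Uc : Fin k → Set W) (hUc : ∀ i, Uc i = {w : W | cs.simple i * w ∈ UL})
    (WL : ℕ → Set W)
    (hWL : ∀ j, WL j = UL ∪ ⋃ (i : Fin k) (_ : (i : ℕ) < j), Uc i) :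
    (∀ j, ∀ w ∈ WL j, ∀ i : Fin k,
        cs.length (cs.simple i * w) < cs.length w → cs.simple i * w ∈ WL j) ∧
    (∀ j : Fin k, Uc j ⊆ {w : W |
        (if cs.length (cs.simple j * w) < cs.length w then cs.simple j * w else w) ∈
          WL (j : ℕ)}) ∧
    WL k = {w : W | cs.length w ≤ L + 1} := by
  subst hUL
  have hball : {w : W | cs.length w ≤ L} ∪ ⋃ i, Uc i = {w : W | cs.length w ≤ L + 1} := by
    simp only [hUc, cs.setOf_length_le_succ, Set.mem_ofPred_eq]
  have hUL_sub (j : ℕ) : {w : W | cs.length w ≤ L} ⊆ WL j := hWL j ▸ Set.subset_union_left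
  have hWL_sub (j : ℕ) : WL j ⊆ {w : W | cs.length w ≤ L + 1} :=
    hball ▸ hWL j ▸ Set.union_subset_union_right _
      (Set.iUnion₂_subset fun i _ ↦ Set.subset_iUnion Uc i)
  refine ⟨fun j ↦ cs.isStack_of_subset (hUL_sub j) (hWL_sub j), fun j w hw ↦ ?_, ?_⟩
  · rw [hUc] at hw
    exact hUL_sub j ((cs.length_fold_le j w).trans hw)
  · rw [hWL, ← hball]
    simp only [Fin.is_lt, Set.iUnion_true]
end
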